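/- arXiv:2202.02670 — 5 statements merged into one kernel-verified Lean document; each statement's English description precedes it below -/
import Mathlib

section
/- Let 0 < a < b be real numbers and set c = √(ab) and ρ = (√b − √a)/(√b + √a). Then the Möbius transform φ_c(z) = (z−c)/(z+c) maps the circle {z ∈ ℂ : |z − (a+b)/2| = (b−a)/2} onto the circle {t ∈ ℂ : |t| = ρ}, and it maps the closed disk {z ∈ ℂ : |z − (a+b)/2| ≤ (b−a)/2} into the closed disk {t ∈ ℂ : |t| ≤ ρ}. -/
/-- The Möbius transform `φ_c(z) = (z - c)/(z + c)`. -/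
noncomputable def mobiusPhi (c : ℝ) (z : ℂ) : ℂ := (z - c) / (z + c)

/-!
`|φ_c(z)| = ρ` says `|z - c| = ρ |z + c|`. For `0 ≤ ρ < 1` this Apollonius condition describes
the circle with center `m = c (1 + ρ²)/(1 - ρ²)` and radius `r = 2cρ/(1 - ρ²)`, because
`|z - c|² - ρ²|z + c|² = (1 - ρ²)(|z - m|² - r²)`; the inequality `|z - c| ≤ ρ |z + c|`
likewise describes the closed disk. For `c = √a √b` and `ρ = (√b - √a)/(√b + √a)` one gets
`m = (a + b)/2` and `r = (b - a)/2`. Every `t ≠ 1` is hit, by `z = c (1 + t)/(1 - t)`.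
-/

open Complex Set

section Apollonius

noncomputable def apolloniusCenter (c ρ : ℝ) : ℝ := c * (1 + ρ ^ 2) / (1 - ρ ^ 2)

noncomputable def apolloniusRadius (c ρ : ℝ) : ℝ := 2 * c * ρ / (1 - ρ ^ 2)

variable {c ρ : ℝ}

theorem normSq_sub_sub_mul_normSq_add (hρ : ρ ^ 2 ≠ 1) (z : ℂ) :
    normSq (z - c) - ρ ^ 2 * normSq (z + c) =
      (1 - ρ ^ 2) * (normSq (z - apolloniusCenter c ρ) - apolloniusRadius c ρ ^ 2) := by
  have : 1 - ρ ^ 2 ≠ 0 := sub_ne_zero.2 hρ.symm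
  simp only [normSq_apply, sub_re, sub_im, add_re, add_im, ofReal_re, ofReal_im,
    apolloniusCenter, apolloniusRadius]
  field_simp
  ring

theorem apolloniusRadius_nonneg (hc : 0 ≤ c) (hρ₀ : 0 ≤ ρ) (hρ₁ : ρ < 1) :
    0 ≤ apolloniusRadius c ρ :=
  div_nonneg (by positivity) (by nlinarith)

theorem norm_sub_le_mul_norm_add_iff (hc : 0 ≤ c) (hρ₀ : 0 ≤ ρ) (hρ₁ : ρ < 1) (z : ℂ) :
    ‖z - c‖ ≤ ρ * ‖z + c‖ ↔ ‖z - apolloniusCenter c ρ‖ ≤ apolloniusRadius c ρ := by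
  have hk : 0 < 1 - ρ ^ 2 := by nlinarith
  rw [← pow_le_pow_iff_left₀ (norm_nonneg _) (by positivity) two_ne_zero,
    ← pow_le_pow_iff_left₀ (norm_nonneg _) (apolloniusRadius_nonneg hc hρ₀ hρ₁) two_ne_zero,
    mul_pow, Complex.sq_norm, Complex.sq_norm, Complex.sq_norm, ← sub_nonpos,
    normSq_sub_sub_mul_normSq_add (by nlinarith), ← sub_nonpos (b := _ ^ 2)]
  simp [mul_nonpos_iff_pos_imp_nonpos, hk, hk.le]

theorem norm_sub_eq_mul_norm_add_iff (hc : 0 ≤ c) (hρ₀ : 0 ≤ ρ) (hρ₁ : ρ < 1) (z : ℂ) :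
    ‖z - c‖ = ρ * ‖z + c‖ ↔ ‖z - apolloniusCenter c ρ‖ = apolloniusRadius c ρ := by
  have hk : 0 < 1 - ρ ^ 2 := by nlinarith
  rw [← pow_left_inj₀ (norm_nonneg _) (by positivity) two_ne_zero,
    ← pow_left_inj₀ (norm_nonneg _) (apolloniusRadius_nonneg hc hρ₀ hρ₁) two_ne_zero,
    mul_pow, Complex.sq_norm, Complex.sq_norm, Complex.sq_norm, ← sub_eq_zero,
    normSq_sub_sub_mul_normSq_add (by nlinarith), mul_eq_zero_iff_left hk.ne', sub_eq_zero]

end Apollonius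

theorem one_sub_sq_sub_div_add {s t : ℝ} (h : t + s ≠ 0) :
    1 - ((t - s) / (t + s)) ^ 2 = 4 * s * t / (t + s) ^ 2 := by
  field_simp
  ring

theorem apolloniusCenter_mul_div {s t : ℝ} (hs : 0 < s) (ht : 0 < t) :
    apolloniusCenter (s * t) ((t - s) / (t + s)) = (s ^ 2 + t ^ 2) / 2 := by
  have : 0 < t + s := by positivity
  rw [apolloniusCenter, one_sub_sq_sub_div_add this.ne']
  field_simp
  ring

theorem apolloniusRadius_mul_div {s t : ℝ} (hs : 0 < s) (ht : 0 < t) :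
    apolloniusRadius (s * t) ((t - s) / (t + s)) = (t ^ 2 - s ^ 2) / 2 := by
  have : 0 < t + s := by positivity
  rw [apolloniusRadius, one_sub_sq_sub_div_add this.ne']
  field_simp
  ring

section MobiusPhi

variable {c ρ : ℝ}

theorem mobiusPhi_mul_one_add_div_one_sub (hc : c ≠ 0) {t : ℂ} (ht : t ≠ 1) :
    mobiusPhi c (c * (1 + t) / (1 - t)) = t := by
  have : (1 : ℂ) - t ≠ 0 := sub_ne_zero.2 ht.symm
  have : (c : ℂ) ≠ 0 := ofReal_ne_zero.2 hc
  rw [mobiusPhi]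
  field_simp
  ring

theorem mapsTo_mobiusPhi_apollonius (hρ : 0 ≤ ρ) :
    MapsTo (mobiusPhi c) {z | ‖z - c‖ ≤ ρ * ‖z + c‖} {t | ‖t‖ ≤ ρ} := fun z hz => by
  rw [mem_ofPred_eq, mobiusPhi, norm_div]
  exact div_le_of_le_mul₀ (norm_nonneg _) hρ hz

theorem image_mobiusPhi_apollonius (hc : c ≠ 0) (hρ : ρ ≠ 1) :
    mobiusPhi c '' {z | ‖z - c‖ = ρ * ‖z + c‖} = {t | ‖t‖ = ρ} := by
  ext t
  constructor
  · rintro ⟨z, hz, rfl⟩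
    have hz₀ : z + c ≠ 0 := by
      intro h
      have hzc : z - c = 0 := by simpa [h] using hz
      exact hc (by exact_mod_cast (by linear_combination (h - hzc) / 2 : (c : ℂ) = 0))
    rw [mem_ofPred_eq, mobiusPhi, norm_div, hz, mul_div_cancel_right₀ _ (norm_ne_zero_iff.2 hz₀)]
  · intro ht
    have ht₁ : t ≠ 1 := by
      rintro rfl
      exact hρ (by simpa using ht.symm)
    refine ⟨c * (1 + t) / (1 - t), ?_, mobiusPhi_mul_one_add_div_one_sub hc ht₁⟩
    have : (1 : ℂ) - t ≠ 0 := sub_ne_zero.2 ht₁.symm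
    have hsub : c * (1 + t) / (1 - t) - c = t * (c * (1 + t) / (1 - t) + c) := by
      field_simp
      ring
    rw [mem_ofPred_eq, hsub, norm_mul, ht]

end MobiusPhi

/-- For `0 < a < b`, `c = √(ab)` and `ρ = (√b - √a)/(√b + √a)`, the Möbius transform
`φ_c` maps the circle of radius `(b-a)/2` centered at `(a+b)/2` onto the circle of
radius `ρ` centered at `0`, and maps the corresponding closed disk into the closed
disk of radius `ρ`. -/
theorem mobius_right_circle (a b : ℝ) (ha : 0 < a) (hab : a < b) :
    (mobiusPhi (Real.sqrt (a * b)) '' {z : ℂ | ‖z - (a + b) / 2‖ = (b - a) / 2}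
        = {t : ℂ | ‖t‖ = (Real.sqrt b - Real.sqrt a) / (Real.sqrt b + Real.sqrt a)}) ∧
    Set.MapsTo (mobiusPhi (Real.sqrt (a * b)))
      {z : ℂ | ‖z - (a + b) / 2‖ ≤ (b - a) / 2}
      {t : ℂ | ‖t‖ ≤ (Real.sqrt b - Real.sqrt a) / (Real.sqrt b + Real.sqrt a)} := by
  have hb : 0 < b := ha.trans hab
  have hs : 0 < √a := Real.sqrt_pos.2 ha
  have ht : 0 < √b := Real.sqrt_pos.2 hb
  have hst : √a < √b := Real.sqrt_lt_sqrt ha.le hab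
  have hc : 0 < √a * √b := mul_pos hs ht
  have hρ₀ : 0 ≤ (√b - √a) / (√b + √a) := div_nonneg (by linarith) (by positivity)
  have hρ₁ : (√b - √a) / (√b + √a) < 1 := (div_lt_one (by positivity)).2 (by linarith)
  have hcenter : (apolloniusCenter (√a * √b) ((√b - √a) / (√b + √a)) : ℂ) = (a + b) / 2 := by
    rw [apolloniusCenter_mul_div hs ht, Real.sq_sqrt ha.le, Real.sq_sqrt hb.le]
    push_cast
    ring
  have hradius : apolloniusRadius (√a * √b) ((√b - √a) / (√b + √a)) = (b - a) / 2 := by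
    rw [apolloniusRadius_mul_div hs ht, Real.sq_sqrt ha.le, Real.sq_sqrt hb.le]
  have hcircle : {z : ℂ | ‖z - (a + b) / 2‖ = (b - a) / 2} =
      {z : ℂ | ‖z - ↑(√a * √b)‖ = (√b - √a) / (√b + √a) * ‖z + ↑(√a * √b)‖} := by
    ext z
    rw [mem_ofPred_eq, mem_ofPred_eq, norm_sub_eq_mul_norm_add_iff hc.le hρ₀ hρ₁, hcenter, hradius]
  have hdisk : {z : ℂ | ‖z - (a + b) / 2‖ ≤ (b - a) / 2} =
      {z : ℂ | ‖z - ↑(√a * √b)‖ ≤ (√b - √a) / (√b + √a) * ‖z + ↑(√a * √b)‖} := by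
    ext z
    rw [mem_ofPred_eq, mem_ofPred_eq, norm_sub_le_mul_norm_add_iff hc.le hρ₀ hρ₁, hcenter, hradius]
  rw [Real.sqrt_mul ha.le, hcircle, hdisk]
  exact ⟨image_mobiusPhi_apollonius hc.ne' hρ₁.ne, mapsTo_mobiusPhi_apollonius hρ₀⟩
end

section
/- Let τ_1,…,τ_d ∈ ℂ be pairwise distinct, let w_1,…,w_d ∈ ℂ be all nonzero, and define μ_n = ∑_{j=1}^d w_j τ_j^n for integers n ≥ 0. Suppose q(t) = ∑_{m=0}^M q_m t^m is a complex polynomial such that ∑_{m=0}^M q_m μ_{n+m} = 0 for every n = 0, 1, …, d−1. Then q(τ_j) = 0 for every j = 1,…,d; i.e. every polynomial annihilating the moment sequence vanishes at all of the nodes τ_j, so the nodes are recoverable as roots of any null vector of the associated Hankel system. -/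
/-!
Exchanging the sums turns the hypothesis into `∑ j, (w j * q(τ j)) * τ j ^ n = 0` for `n < d`,
i.e. the vector `(w j * q(τ j))_j` is killed by the `d × d` Vandermonde matrix of the nodes,
which is invertible because the nodes are distinct. As the weights are nonzero, `q(τ j) = 0`.
-/

open Finset

theorem sum_mul_sum_mul_pow_add {ι R : Type*} [Fintype ι] [CommSemiring R] (s : Finset ℕ)
    (q : ℕ → R) (w τ : ι → R) (n : ℕ) :
    ∑ m ∈ s, q m * ∑ j, w j * τ j ^ (n + m) = ∑ j, (w j * ∑ m ∈ s, q m * τ j ^ m) * τ j ^ n := by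
  simp_rw [mul_sum, sum_mul]
  rw [sum_comm]
  refine sum_congr rfl fun j _ => sum_congr rfl fun m _ => ?_
  rw [pow_add]
  ring

/-- Any polynomial `q(t) = ∑_{m=0}^M q_m t^m` annihilating the moment sequence
`μ_n = ∑_j w_j τ_j^n` (with distinct nodes and nonzero weights) for `n = 0, …, d-1`
vanishes at all the nodes `τ_j`. -/
theorem prony_null_vector_roots (d : ℕ) (τ w : Fin d → ℂ) (hτ : Function.Injective τ)
    (hw : ∀ j, w j ≠ 0) (M : ℕ) (q : ℕ → ℂ)
    (hq : ∀ n < d, ∑ m ∈ Finset.range (M + 1), q m * (∑ j, w j * τ j ^ (n + m)) = 0) :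
    ∀ j, ∑ m ∈ Finset.range (M + 1), q m * τ j ^ m = 0 := by
  intro j
  have hweighted : (fun j => w j * ∑ m ∈ range (M + 1), q m * τ j ^ m) = 0 :=
    Matrix.eq_zero_of_forall_pow_sum_mul_pow_eq_zero hτ fun n => by
      rw [← sum_mul_sum_mul_pow_add]
      exact hq n n.isLt
  exact (mul_eq_zero.mp (congrFun hweighted j)).resolve_left (hw j)
end

section
/- Let c > 0 be real, let ξ_1,…,ξ_N ∈ ℂ with Re ξ_j ≠ 0 for all j, let r_1,…,r_N ∈ ℂ, and define g(z) = ∑_{j=1}^N r_j/(ξ_j − z). Then for every integer k, (1/(2πi)) ∮_{|t|=1} g(−c(t+1)/(t−1)) · t^{−(k+1)} dt = −(1/(2π)) ∫_{−∞}^{∞} g(iy) · ((iy − c)/(iy + c))^{−(k+1)} · (2c/(iy + c)²) dy, where the improper integral on the right converges absolutely. (This is the change of variables t = φ_c(z), z = iy, turning the unit-circle contour integral into an integral of the data of g along the imaginary axis.) -/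
/-!
Parametrize the unit circle by `t = φ_c(iy)`, `y ∈ ℝ`: the angle of `φ_c(iy)` is
`π - 2 arctan (y / c)`, which decreases from `2π` to `0`, so the circle is traversed once in the
negative direction. With `dt = φ_c'(iy) i dy` and `ψ_c(φ_c(iy)) = iy` the contour integral becomes
minus `i` times the integral along the imaginary axis. Integrability also transfers along this
change of variables, and on the circle side it holds because `ψ_c` maps the unit circle into the
imaginary axis, where `|g| ≤ ∑ |r_j| / |Re ξ_j|`.
-/

open MeasureTheory Complex Set Metric

noncomputable section

/-- The Möbius transform `φ_c`. -/
def cayley (c z : ℂ) : ℂ := (z - c) / (z + c)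

/-- The inverse `ψ_c` of `φ_c`. -/
def cayleyInv (c t : ℂ) : ℂ := -c * (t + 1) / (t - 1)

lemma cayleyInv_cayley {c z : ℂ} (hc : c ≠ 0) (hz : z + c ≠ 0) : cayleyInv c (cayley c z) = z := by
  rw [cayleyInv, cayley, div_add_one hz, div_sub_one hz, show z - c - (z + c) = -(2 * c) by ring]
  field_simp
  ring

lemma re_cayleyInv_eq_zero (c : ℝ) {t : ℂ} (ht : ‖t‖ = 1) : (cayleyInv c t).re = 0 := by
  have hnum : (t + 1).re * (t - 1).re + (t + 1).im * (t - 1).im = 0 := by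
    have := Complex.sq_norm t
    rw [ht, normSq_apply] at this
    simp only [add_re, sub_re, one_re, add_im, sub_im, one_im]
    linear_combination -this
  rw [cayleyInv, mul_div_assoc, ← ofReal_neg, re_ofReal_mul, div_re, ← add_div, hnum, zero_div,
    mul_zero]

lemma I_mul_ofReal_add_ofReal_ne_zero (y : ℝ) {c : ℝ} (hc : c ≠ 0) : I * y + c ≠ 0 :=
  fun h => hc (by simpa using congrArg re h)

def cayleyAngle (c y : ℝ) : ℝ := Real.pi - 2 * Real.arctan (y / c)

lemma circleMap_cayleyAngle {c : ℝ} (hc : c ≠ 0) (y : ℝ) :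
    circleMap 0 1 (cayleyAngle c y) = cayley c (I * y) := by
  set α := Real.arctan (y / c)
  have hcos : Real.cos α ≠ 0 := (Real.cos_arctan_pos _).ne'
  have hsin : Real.sin α = y / c * Real.cos α := by
    rw [← Real.tan_arctan (y / c), Real.tan_eq_sin_div_cos, div_mul_cancel₀ _ hcos]
  have hexp : exp (α * I) = Real.cos α * (1 + y / c * I) := by
    rw [exp_mul_I, ← ofReal_cos, ← ofReal_sin, hsin]; push_cast; ring
  have hexp_neg : exp (-α * I) = Real.cos α * (1 - y / c * I) := by
    rw [exp_mul_I, ← ofReal_neg, ← ofReal_cos, ← ofReal_sin, Real.cos_neg, Real.sin_neg, hsin]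
    push_cast; ring
  have hangle : (cayleyAngle c y : ℂ) * I = Real.pi * I + -α * I - α * I := by
    simp only [cayleyAngle, ofReal_sub, ofReal_mul, ofReal_ofNat]; ring
  have hden : (Real.cos α : ℂ) * (1 + y / c * I) ≠ 0 := hexp ▸ exp_ne_zero _
  have hc' : (c : ℂ) ≠ 0 := ofReal_ne_zero.2 hc
  rw [circleMap_zero, ofReal_one, one_mul, hangle, exp_sub, exp_add, exp_pi_mul_I, hexp,
    hexp_neg, cayley, div_eq_div_iff hden (I_mul_ofReal_add_ofReal_ne_zero y hc)]
  field_simp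
  ring

lemma hasDerivAt_cayleyAngle {c : ℝ} (hc : c ≠ 0) (y : ℝ) :
    HasDerivAt (cayleyAngle c) (-(2 * c / (c ^ 2 + y ^ 2))) y := by
  refine ((((hasDerivAt_id' y).div_const c).arctan.const_mul 2).const_sub Real.pi).congr_deriv ?_
  field_simp

lemma cayleyAngle_injective {c : ℝ} (hc : c ≠ 0) : (cayleyAngle c).Injective := fun _ _ h =>
  (div_left_inj' hc).1 <| Real.arctan_injective <| mul_left_cancel₀ two_ne_zero <|
    sub_right_injective h

lemma range_cayleyAngle {c : ℝ} (hc : c ≠ 0) : range (cayleyAngle c) = Ioo 0 (2 * Real.pi) := by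
  ext θ
  constructor
  · rintro ⟨y, rfl⟩
    obtain ⟨h₁, h₂⟩ := Real.arctan_mem_Ioo (y / c)
    constructor <;> simp only [cayleyAngle] <;> linarith
  · rintro ⟨h₁, h₂⟩
    refine ⟨c * Real.tan ((Real.pi - θ) / 2), ?_⟩
    rw [cayleyAngle, mul_div_cancel_left₀ _ hc, Real.arctan_tan (by linarith) (by linarith)]
    ring

section ChangeOfVariables

variable {E : Type*} [NormedAddCommGroup E] [NormedSpace ℂ E] {c : ℝ}

lemma abs_deriv_cayleyAngle_smul_circleIntegrand (hc : 0 < c) (F : ℂ → E) (y : ℝ) :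
    |-(2 * c / (c ^ 2 + y ^ 2))| • (deriv (circleMap 0 1) (cayleyAngle c y) •
      F (circleMap 0 1 (cayleyAngle c y))) =
      -I • ((2 * c / (I * y + c) ^ 2) • F (cayley c (I * y))) := by
  have hfac : (c : ℂ) ^ 2 + (y : ℂ) ^ 2 = -((I * y + c) * (I * y - c)) := by
    linear_combination (y : ℂ) ^ 2 * I_sq
  have hplus := I_mul_ofReal_add_ofReal_ne_zero y hc.ne'
  have hminus : I * y - c ≠ 0 := by
    simpa [sub_eq_add_neg] using I_mul_ofReal_add_ofReal_ne_zero y (neg_ne_zero.2 hc.ne')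
  rw [deriv_circleMap, circleMap_cayleyAngle hc.ne', abs_neg, abs_of_pos (by positivity),
    ← Complex.coe_smul, smul_smul, smul_smul, cayley]
  congr 1
  push_cast
  rw [hfac]
  field_simp

theorem circleIntegral_eq_neg_I_smul_integral_cayley (hc : 0 < c) (F : ℂ → E) :
    (∮ t in C(0, 1), F t) = -I • ∫ y : ℝ, (2 * c / (I * y + c) ^ 2) • F (cayley c (I * y)) := by
  rw [circleIntegral, intervalIntegral.integral_of_le Real.two_pi_pos.le,
    integral_Ioc_eq_integral_Ioo, ← range_cayleyAngle hc.ne', ← image_univ,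
    integral_image_eq_integral_abs_deriv_smul MeasurableSet.univ
      (fun y _ => (hasDerivAt_cayleyAngle hc.ne' y).hasDerivWithinAt)
      (cayleyAngle_injective hc.ne').injOn, setIntegral_univ]
  simp_rw [abs_deriv_cayleyAngle_smul_circleIntegrand hc, integral_smul]

theorem circleIntegrable_iff_integrable_cayley (hc : 0 < c) {F : ℂ → E} :
    CircleIntegrable F 0 1 ↔
      Integrable (fun y : ℝ => (2 * c / (I * y + c) ^ 2) • F (cayley c (I * y))) := by
  rw [circleIntegrable_iff, intervalIntegrable_iff_integrableOn_Ioo_of_le Real.two_pi_pos.le,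
    ← range_cayleyAngle hc.ne', ← image_univ,
    integrableOn_image_iff_integrableOn_abs_deriv_smul MeasurableSet.univ
      (fun y _ => (hasDerivAt_cayleyAngle hc.ne' y).hasDerivWithinAt)
      (cayleyAngle_injective hc.ne').injOn, integrableOn_univ]
  simp_rw [abs_deriv_cayleyAngle_smul_circleIntegrand hc]
  exact integrable_smul_iff (neg_ne_zero.2 I_ne_zero) _

end ChangeOfVariables

lemma circleIntegrable_of_norm_le {E : Type*} [NormedAddCommGroup E] {F : ℂ → E}
    (hF : StronglyMeasurable F) {c : ℂ} {R M : ℝ} (hM : ∀ t ∈ sphere c |R|, ‖F t‖ ≤ M) :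
    CircleIntegrable F c R :=
  (intervalIntegrable_iff_integrableOn_Ioc_of_le Real.two_pi_pos.le).2 <|
    Measure.integrableOn_of_bounded measure_Ioc_lt_top.ne
      (hF.comp_measurable (continuous_circleMap c R).measurable).aestronglyMeasurable
      (ae_of_all _ fun θ => hM _ (circleMap_mem_sphere' c R θ))

lemma norm_sum_div_sub_le_of_re_eq_zero {ι : Type*} (s : Finset ι) (r ξ : ι → ℂ)
    (hξ : ∀ j, (ξ j).re ≠ 0) {z : ℂ} (hz : z.re = 0) :
    ‖∑ j ∈ s, r j / (ξ j - z)‖ ≤ ∑ j ∈ s, ‖r j‖ / |(ξ j).re| := by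
  refine (norm_sum_le _ _).trans (Finset.sum_le_sum fun j _ => ?_)
  rw [norm_div]
  refine div_le_div_of_nonneg_left (norm_nonneg _) (abs_pos.2 (hξ j)) ?_
  simpa [hz] using abs_re_le_norm (ξ j - z)

end

/-- Change of variables `t = φ_c(z)`, `z = iy`: the unit-circle contour integral of
`g(ψ_c(t)) t^(-(k+1))`, where `g(z) = ∑_j r_j/(ξ_j - z)` has no poles on the imaginary
axis, equals minus the integral of the data of `g` along the imaginary axis, i.e.
`(1/(2πi)) ∮_{|t|=1} g(-c(t+1)/(t-1)) t^(-(k+1)) dt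
   = -(1/(2π)) ∫_ℝ g(iy) ((iy-c)/(iy+c))^(-(k+1)) (2c/(iy+c)²) dy`,
the latter integral converging absolutely. -/
theorem circleIntegral_eq_imaginary_axis_integral (c : ℝ) (hc : 0 < c) (N : ℕ)
    (ξ r : Fin N → ℂ) (hξ : ∀ j, (ξ j).re ≠ 0) (k : ℤ) :
    Integrable (fun y : ℝ =>
      (∑ j, r j / (ξ j - Complex.I * y)) *
        ((Complex.I * y - c) / (Complex.I * y + c)) ^ (-(k + 1)) *
        (2 * c / (Complex.I * y + c) ^ 2)) ∧
    (1 / (2 * (Real.pi : ℂ) * Complex.I)) *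
        (∮ t in C(0, 1),
          (∑ j, r j / (ξ j - (-c * (t + 1) / (t - 1)))) * t ^ (-(k + 1))) =
      -(1 / (2 * (Real.pi : ℂ))) *
        ∫ y : ℝ,
          (∑ j, r j / (ξ j - Complex.I * y)) *
            ((Complex.I * y - c) / (Complex.I * y + c)) ^ (-(k + 1)) *
            (2 * c / (Complex.I * y + c) ^ 2) := by
  set F : ℂ → ℂ := fun t => (∑ j, r j / (ξ j - cayleyInv c t)) * t ^ (-(k + 1))
  have hF : CircleIntegrable F 0 1 := by
    refine circleIntegrable_of_norm_le (by unfold F cayleyInv; fun_prop)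
      (M := ∑ j, ‖r j‖ / |(ξ j).re|) fun t ht => ?_
    rw [abs_one, mem_sphere_zero_iff_norm] at ht
    rw [norm_mul, norm_zpow, ht, one_zpow, mul_one]
    exact norm_sum_div_sub_le_of_re_eq_zero _ r ξ hξ (re_cayleyInv_eq_zero c ht)
  have hintegrand : (fun y : ℝ => (2 * c / (I * y + c) ^ 2) • F (cayley c (I * y))) =
      fun y : ℝ => (∑ j, r j / (ξ j - I * y)) * ((I * y - c) / (I * y + c)) ^ (-(k + 1)) *
        (2 * c / (I * y + c) ^ 2) := by
    funext y
    dsimp only [F]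
    rw [smul_eq_mul, cayleyInv_cayley (ofReal_ne_zero.2 hc.ne')
      (I_mul_ofReal_add_ofReal_ne_zero y hc.ne'), cayley]
    ring
  show _ ∧ 1 / (2 * (Real.pi : ℂ) * I) * (∮ t in C(0, 1), F t) = _
  refine ⟨hintegrand ▸ (circleIntegrable_iff_integrable_cayley hc).1 hF, ?_⟩
  rw [circleIntegral_eq_neg_I_smul_integral_cayley hc F, hintegrand, smul_eq_mul,
    ← mul_assoc]
  congr 1
  field_simp
end

section
/- Let c > 0 be real, let ξ_1,…,ξ_N be nonzero real numbers with ξ_j ≠ −c for all j, let r_1,…,r_N be real numbers, and define g(z) = ∑_{j=1}^N r_j/(ξ_j − z). Then for every nonzero integer k, the Fourier coefficient ĝ_k := (1/(2πi)) ∮_{|t|=1} g(−c(t+1)/(t−1)) · t^{−(k+1)} dt is a real number. -/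
/-!
The integrand `F(t) = g(ψ_c(t)) t^(-(k+1))` has real coefficients, so `F (conj t) = conj (F t)`.
Complex conjugation maps the unit circle onto itself reversing its orientation, hence
`conj (∮ F) = -∮ F`: the contour integral is purely imaginary, and dividing it by `2πi` gives a
real number.
-/

open Complex Real ComplexConjugate

theorem circleIntegral_conj (f : ℂ → ℂ) (c : ℂ) (R : ℝ) :
    conj (∮ z in C(c, R), f z) = -∮ z in C(conj c, R), conj (f (conj z)) := by
  set h : ℝ → ℂ := fun θ ↦
    deriv (circleMap (conj c) R) θ • conj (f (conj (circleMap (conj c) R θ)))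
  have h_periodic : Function.Periodic h (2 * π) := fun θ ↦ by
    simp only [h, periodic_circleMap (conj c) R θ, deriv_circleMap, periodic_circleMap 0 R θ]
  have h_conj_integrand (θ : ℝ) :
      conj (deriv (circleMap c R) θ • f (circleMap c R θ)) = -h (-θ) := by
    simp only [h, deriv_circleMap, smul_eq_mul, map_mul, conj_circleMap_zero, conj_I,
      ← conj_circleMap, conj_conj]
    ring
  calc conj (∮ z in C(c, R), f z)
      = ∫ θ in 0..2 * π, -h (-θ) := by
        simp only [circleIntegral, ← intervalIntegral.intervalIntegral_conj, h_conj_integrand]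
    _ = -∫ θ in 0..2 * π, h θ := by
        rw [intervalIntegral.integral_neg, intervalIntegral.integral_comp_neg h]
        simpa using h_periodic.intervalIntegral_add_eq (-(2 * π)) 0
    _ = -∮ z in C(conj c, R), conj (f (conj z)) := rfl

theorem im_one_div_two_pi_I_mul_circleIntegral_eq_zero {f : ℂ → ℂ}
    (hf : ∀ z, conj (f (conj z)) = f z) (c R : ℝ) :
    (1 / (2 * π * I) * ∮ z in C(c, R), f z).im = 0 := by
  have h_conj : conj (∮ z in C(c, R), f z) = -∮ z in C(c, R), f z := by
    simpa only [conj_ofReal, hf] using circleIntegral_conj f c R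
  rw [← conj_eq_iff_im, map_mul, h_conj]
  simp only [map_div₀, map_one, map_mul, map_ofNat, conj_ofReal, conj_I]
  ring

theorem fourier_coeff_real_of_real_poles_general (c : ℝ) (N : ℕ) (ξ r : Fin N → ℝ) (k : ℤ) :
    ((1 / (2 * (Real.pi : ℂ) * Complex.I)) *
        (∮ t in C(0, 1),
          (∑ j, (r j : ℂ) / ((ξ j : ℂ) - (-c * (t + 1) / (t - 1)))) * t ^ (-(k + 1)))).im
      = 0 := by
  refine mod_cast im_one_div_two_pi_I_mul_circleIntegral_eq_zero (fun t ↦ ?_) 0 1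
  simp only [map_mul, map_sum, map_div₀, map_sub, map_add, map_one, map_zpow₀,
    conj_ofReal, conj_conj]

/-- When the poles `ξ_j` are nonzero reals (with `ξ_j ≠ -c`) and the residues `r_j`
are real, the Fourier coefficients
`ĝ_k = (1/(2πi)) ∮_{|t|=1} g(-c(t+1)/(t-1)) t^(-(k+1)) dt`, `k ≠ 0`, of the
transformed function are real numbers. -/
theorem fourier_coeff_real_of_real_poles (c : ℝ) (hc : 0 < c) (N : ℕ) (ξ r : Fin N → ℝ)
    (hξ0 : ∀ j, ξ j ≠ 0) (hξc : ∀ j, ξ j ≠ -c) (k : ℤ) (hk : k ≠ 0) :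
    ((1 / (2 * (Real.pi : ℂ) * Complex.I)) *
        (∮ t in C(0, 1),
          (∑ j, (r j : ℂ) / ((ξ j : ℂ) - (-c * (t + 1) / (t - 1)))) * t ^ (-(k + 1)))).im
      = 0 :=
  fourier_coeff_real_of_real_poles_general c N ξ r k
end

section
/- Let c > 0 be real, let ξ_1,…,ξ_N ∈ ℂ with Re ξ_j ≠ 0 for all j, let r_1,…,r_N ∈ ℂ, and define g(z) = ∑_{j=1}^N r_j/(ξ_j − z). Set τ_j = (ξ_j − c)/(ξ_j + c) and w_j = 2c·r_j/(ξ_j + c)². Then for every integer k ≤ −1, the Fourier coefficient ĝ_k := (1/(2πi)) ∮_{|t|=1} g(−c(t+1)/(t−1)) · t^{−(k+1)} dt equals −∑_{j : Re ξ_j > 0} w_j τ_j^{−(k+1)}; i.e. the negatively indexed Fourier coefficients of the transformed function are exactly signed power sums of the images under φ_c of the poles of g lying in the right half-plane. -/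
/-!
For `t ≠ 1` one has `ξ - ψ_c(t) = ((ξ + c) t - (ξ - c)) / (t - 1)`, so the `j`-th term of
`g(ψ_c(t)) t^n` is an entire function divided by a linear polynomial vanishing at `τ_j = φ_c(ξ_j)`.
Since `‖ξ - c‖ < ‖ξ + c‖` exactly when `Re ξ > 0`, this zero lies inside the unit disc for poles in
the right half-plane, where the Cauchy integral formula gives
`2πi · r (τ - 1) τ^n / (ξ + c) = -2πi · w τ^n` (as `τ - 1 = -2c / (ξ + c)`), and outside it for the
poles in the left half-plane, whose terms are holomorphic on the closed disc and integrate to zero.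
-/

open Complex Metric Set Real

theorem mul_sub_ne_zero_of_norm_mul_ne {𝕜 : Type*} [NormedDivisionRing 𝕜] {a b t : 𝕜}
    (h : ‖a‖ * ‖t‖ ≠ ‖b‖) : a * t - b ≠ 0 := by
  rw [sub_ne_zero]
  rintro rfl
  exact h (norm_mul a t).symm

section LinearDenominator

variable {F : ℂ → ℂ} {a b : ℂ} {R : ℝ}

theorem circleIntegrable_div_mul_sub (hF : Continuous F) (hR : 0 ≤ R) (h : ‖a‖ * R ≠ ‖b‖) :
    CircleIntegrable (fun t => F t / (a * t - b)) 0 R :=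
  ContinuousOn.circleIntegrable hR <| hF.continuousOn.div (by fun_prop) fun t ht =>
    mul_sub_ne_zero_of_norm_mul_ne (by rwa [mem_sphere_zero_iff_norm.1 ht])

theorem circleIntegral_div_mul_sub_of_norm_lt (hF : Differentiable ℂ F) (h : ‖b‖ < ‖a‖ * R) :
    (∮ t in C(0, R), F t / (a * t - b)) = 2 * π * I * F (b / a) / a := by
  have ha : a ≠ 0 := by
    rintro rfl
    simp only [norm_zero, zero_mul] at h
    exact (norm_nonneg b).not_gt h
  have hmem : b / a ∈ ball (0 : ℂ) R := by
    rwa [mem_ball_zero_iff, norm_div, div_lt_iff₀ (norm_pos_iff.2 ha), mul_comm]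
  calc (∮ t in C(0, R), F t / (a * t - b))
      = ∮ t in C(0, R), (t - b / a)⁻¹ • (a⁻¹ * F t) := by
        congr 1
        funext t
        rw [smul_eq_mul, show a * t - b = a * (t - b / a) by field_simp]
        field_simp
    _ = 2 * π * I * F (b / a) / a := by
        rw [((hF.const_mul _).diffContOnCl).circleIntegral_sub_inv_smul hmem, smul_eq_mul]
        ring

theorem circleIntegral_div_mul_sub_of_lt_norm (hF : Differentiable ℂ F) (hR : 0 ≤ R)
    (h : ‖a‖ * R < ‖b‖) : (∮ t in C(0, R), F t / (a * t - b)) = 0 := by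
  refine DiffContOnCl.circleIntegral_eq_zero hR (DifferentiableOn.diffContOnCl ?_)
  refine (hF.differentiableOn.div (by fun_prop) fun t ht => ?_).mono closure_ball_subset_closedBall
  refine mul_sub_ne_zero_of_norm_mul_ne (ne_of_lt ?_)
  calc ‖a‖ * ‖t‖ ≤ ‖a‖ * R := by gcongr; exact mem_closedBall_zero_iff.1 ht
    _ < ‖b‖ := h

end LinearDenominator

section HalfPlane

variable {c : ℝ} {z : ℂ}

theorem norm_sub_ofReal_lt_norm_add_ofReal (hc : 0 < c) (hz : 0 < z.re) :
    ‖z - c‖ < ‖z + c‖ := by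
  rw [← sq_lt_sq₀ (norm_nonneg _) (norm_nonneg _), Complex.sq_norm, Complex.sq_norm,
    normSq_apply, normSq_apply]
  simp only [sub_re, add_re, sub_im, add_im, ofReal_re, ofReal_im, sub_zero, add_zero]
  nlinarith

theorem norm_add_ofReal_lt_norm_sub_ofReal (hc : 0 < c) (hz : z.re < 0) :
    ‖z + c‖ < ‖z - c‖ := by
  have := norm_sub_ofReal_lt_norm_add_ofReal (z := -z) hc (by simpa using hz)
  rwa [← neg_add', norm_neg, neg_add_eq_sub, ← neg_sub, norm_neg] at this

theorem norm_add_ofReal_ne_norm_sub_ofReal (hc : 0 < c) (hz : z.re ≠ 0) :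
    ‖z + c‖ ≠ ‖z - c‖ := by
  rcases hz.lt_or_gt with hz | hz
  · exact (norm_add_ofReal_lt_norm_sub_ofReal hc hz).ne
  · exact (norm_sub_ofReal_lt_norm_add_ofReal hc hz).ne'

end HalfPlane

theorem sub_neg_mul_add_div_sub_one {c ξ t : ℂ} (ht : t ≠ 1) :
    ξ - (-c * (t + 1) / (t - 1)) = ((ξ + c) * t - (ξ - c)) / (t - 1) := by
  field_simp [sub_ne_zero.2 ht]
  ring

theorem circleIntegral_pole_contribution {c : ℝ} (hc : 0 < c) {ξ : ℂ} (hξ : ξ.re ≠ 0) (r : ℂ)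
    (n : ℕ) :
    (∮ t in C(0, 1), r * ((t - 1) * t ^ n) / ((ξ + c) * t - (ξ - c))) =
      if 0 < ξ.re then
        -(2 * π * I * (2 * c * r / (ξ + c) ^ 2 * ((ξ - c) / (ξ + c)) ^ n))
      else 0 := by
  split_ifs with hre
  · have hne : ξ + c ≠ 0 := fun h => by
      have := congrArg re h
      simp only [add_re, ofReal_re, zero_re] at this
      linarith
    rw [circleIntegral_div_mul_sub_of_norm_lt (by fun_prop)
      (by simpa using norm_sub_ofReal_lt_norm_add_ofReal hc hre)]
    field_simp
    ring
  · exact circleIntegral_div_mul_sub_of_lt_norm (by fun_prop) zero_le_one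
      (by simpa using norm_add_ofReal_lt_norm_sub_ofReal hc (lt_of_le_of_ne (not_lt.1 hre) hξ))

/-- For `g(z) = ∑_j r_j/(ξ_j - z)` with poles off the imaginary axis, setting
`τ_j = (ξ_j - c)/(ξ_j + c)` and `w_j = 2c r_j/(ξ_j + c)²`, the negatively indexed
Fourier coefficients `ĝ_k = (1/(2πi)) ∮_{|t|=1} g(-c(t+1)/(t-1)) t^(-(k+1)) dt`,
`k ≤ -1`, are the signed power sums `-∑_{j : Re ξ_j > 0} w_j τ_j^(-(k+1))` of the
images under `φ_c` of the poles of `g` in the right half-plane. -/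
theorem fourier_coeff_neg_index_power_sum (c : ℝ) (hc : 0 < c) (N : ℕ)
    (ξ r : Fin N → ℂ) (hξ : ∀ j, (ξ j).re ≠ 0) (k : ℤ) (hk : k ≤ -1) :
    (1 / (2 * (Real.pi : ℂ) * Complex.I)) *
        (∮ t in C(0, 1),
          (∑ j, r j / (ξ j - (-c * (t + 1) / (t - 1)))) * t ^ (-(k + 1))) =
      -∑ j ∈ Finset.univ.filter (fun j => 0 < (ξ j).re),
          (2 * c * r j / (ξ j + c) ^ 2) * ((ξ j - c) / (ξ j + c)) ^ (-(k + 1)) := by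
  obtain ⟨n, hn⟩ : ∃ n : ℕ, -(k + 1) = n := ⟨(-(k + 1)).toNat, by omega⟩
  simp only [hn, zpow_natCast]
  have hcongr : (fun t : ℂ => (∑ j, r j / (ξ j - (-c * (t + 1) / (t - 1)))) * t ^ n)
      =ᶠ[Filter.codiscreteWithin (sphere 0 |1|)]
        fun t => ∑ j, r j * ((t - 1) * t ^ n) / ((ξ j + c) * t - (ξ j - c)) :=
    Filter.mem_of_superset (compl_singleton_mem_codiscreteWithin 1) fun t ht => by
      simp only [Finset.sum_mul]
      refine Finset.sum_congr rfl fun j _ => ?_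
      rw [sub_neg_mul_add_div_sub_one ht, div_div_eq_mul_div]
      ring
  rw [circleIntegral.circleIntegral_congr_codiscreteWithin hcongr one_ne_zero,
    circleIntegral.integral_fun_sum fun j _ =>
      circleIntegrable_div_mul_sub (by fun_prop) zero_le_one
        (by simpa using norm_add_ofReal_ne_norm_sub_ofReal hc (hξ j)),
    Finset.sum_congr rfl fun j _ => circleIntegral_pole_contribution hc (hξ j) (r j) n,
    ← Finset.sum_filter, Finset.sum_neg_distrib, ← Finset.mul_sum]
  field_simp
end
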